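/- arXiv:2010.10309 — 2 statements merged into one kernel-verified Lean document; each statement's English description precedes it below -/
import Mathlib

section
/- The approval-maximising rule (with the canonical lexicographic tie-breaking rule T) is not approximately strategyproof, under both the overlap preference model and the cost preference model: there exist an allocation instance I = ⟨𝒫, c, B⟩, an approval profile A in which some agent i submits a ballot A_i ≠ top_i(𝒫), such that for every project p ∈ 𝒫, agent i strictly prefers F(I, A) to F(I, (A_{-i}, top_i(𝒫))) ∪ {p} with respect to ⪰_{top_i(𝒫)}, where F is the approval-maximising rule. In particular, this is witnessed by the instance with eight projects of costs c(p_1) = c(p_2) = c(p_3) = 4, c(p_4) = c(p_5) = 6, c(p_6) = c(p_7) = c(p_8) = 3, budget B = 12, and three agents with preference orders p_6 ▷_1 p_7 ▷_1 p_8 ▷_1 …, p_4 ▷_2 p_5 ▷_2 …, and p_1 ▷_3 p_2 ▷_3 p_3 ▷_3 …, where agent 1 submits {p_5, p_6, p_7} instead of {p_6, p_7, p_8}. -/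
open Finset

namespace PB

open scoped Classical

/-- An approval/shortlisting profile for `n` agents: each agent contributes a
finite set of (indices of) projects. Projects are identified with their indices. -/
abbrev Profile (n : ℕ) := Fin n → Finset ℕ

/-- The union `⋃ P` of all proposals in a profile. -/
def unionP {n : ℕ} (P : Profile n) : Finset ℕ := Finset.univ.sup P

/-- Encoding of a finite set of projects; a set is lexicographically preferred
(amongst the projects on which two sets differ, the one with the lowest index
belongs to the preferred set) iff its encoding is larger. -/
noncomputable def enc (P : Finset ℕ) : ℚ := P.sum fun i => (1 / 2 : ℚ) ^ i

/-- The canonical tie-breaking rule `T` on a family of sets of projects: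
the (unique) lexicographically first set of the family. -/
noncomputable def Tfam (𝔓 : Finset (Finset ℕ)) : Finset ℕ :=
  if h : ∃ P ∈ 𝔓, ∀ Q ∈ 𝔓, enc Q ≤ enc P then h.choose else ∅

/-- The `r`-least element of a finite set of projects (`r` read as "strictly before"). -/
noncomputable def first (r : ℕ → ℕ → Prop) (P : Finset ℕ) : ℕ :=
  if h : ∃ p ∈ P, ∀ q ∈ P, q ≠ p → r p q then h.choose else 0

/-- The canonical tie-breaking rule `T` on a nonempty set of projects: least index. -/
noncomputable def Tproj (P : Finset ℕ) : ℕ := first (· < ·) P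

noncomputable def greedyAux (c : ℕ → ℕ) (r : ℕ → ℕ → Prop) : ℕ → Finset ℕ → ℕ → Finset ℕ
  | 0, _, _ => ∅
  | fuel + 1, P, b =>
    if P.Nonempty then
      if c (first r P) ≤ b then
        insert (first r P) (greedyAux c r fuel (P.erase (first r P)) (b - c (first r P)))
      else greedyAux c r fuel (P.erase (first r P)) b
    else ∅

/-- Greedy selection: examine the projects of `P` following the strict order `r`,
selecting a project iff doing so keeps the total cost within the budget `B`. -/
noncomputable def GREED (c : ℕ → ℕ) (B : ℕ) (P : Finset ℕ) (r : ℕ → ℕ → Prop) : Finset ℕ :=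
  greedyAux c r P.card P B

/-- A shortlisting rule: for every number `n` of agents, cost function, budget
limit, universe `ℙ` of projects and shortlisting profile, a shortlist. -/
abbrev ShortRule := ∀ n : ℕ, (ℕ → ℕ) → ℕ → Finset ℕ → Profile n → Finset ℕ

/-- An allocation rule: for every number `n` of agents, cost function, budget
limit, set `Sh` of shortlisted projects and approval profile, a budget allocation. -/
abbrev AllocRule := ∀ n : ℕ, (ℕ → ℕ) → ℕ → Finset ℕ → Profile n → Finset ℕ

/-- A shortlisting rule must return a subset of the union of the proposals. -/
def IsShortRule (R : ShortRule) : Prop :=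
  ∀ (n : ℕ) (c : ℕ → ℕ) (B : ℕ) (ℙ : Finset ℕ) (P : Profile n),
    (∀ j, P j ⊆ ℙ) → R n c B ℙ P ⊆ unionP P

/-- An allocation rule must return a feasible budget allocation. -/
def IsAllocRule (F : AllocRule) : Prop :=
  ∀ (n : ℕ) (c : ℕ → ℕ) (B : ℕ) (Sh : Finset ℕ) (A : Profile n),
    (∀ j, A j ⊆ Sh) → F n c B Sh A ⊆ Sh ∧ (F n c B Sh A).sum c ≤ B

/-- The nomination shortlisting rule. -/
def nomination : ShortRule := fun _ _ _ _ P => unionP P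

/-- Non-wastefulness of a shortlisting rule. -/
def NonWasteful (R : ShortRule) : Prop :=
  ∀ (n : ℕ) (c : ℕ → ℕ) (B : ℕ) (ℙ : Finset ℕ) (P : Profile n),
    (∀ p ∈ ℙ, c p ≤ B) → (∀ j, P j ⊆ ℙ) →
    B ≤ (R n c B ℙ P).sum c ∨ R n c B ℙ P = unionP P

/-- A shortlist `S` is representatively dominated (given instance and profile). -/
def RepDominated {n : ℕ} (c : ℕ → ℕ) (ℙ : Finset ℕ) (P : Profile n) (S : Finset ℕ) : Prop :=
  ∃ S' ⊆ ℙ, S'.sum c ≤ S.sum c ∧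
    (∀ i, (S ∩ P i).card ≤ (S' ∩ P i).card) ∧ ∃ i, (S ∩ P i).card < (S' ∩ P i).card

/-- Representation efficiency of a shortlisting rule. -/
def RepEfficient (R : ShortRule) : Prop :=
  ∀ (n : ℕ) (c : ℕ → ℕ) (B : ℕ) (ℙ : Finset ℕ) (P : Profile n),
    (∀ p ∈ ℙ, c p ≤ B) → (∀ j, P j ⊆ ℙ) →
    ¬ RepDominated c ℙ P (R n c B ℙ P)

/-- The representation score `Σ_i Σ_{ℓ=0}^{|P_i ∩ S|} (1/n)^ℓ`. -/
noncomputable def reprScore (n : ℕ) (P : Profile n) (S : Finset ℕ) : ℚ :=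
  ∑ i, ∑ l ∈ Finset.range ((P i ∩ S).card + 1), (1 / (n : ℚ)) ^ l

/-- The `k`-equal-representation shortlisting rule. -/
noncomputable def equalRepr (k : ℕ) : ShortRule := fun n c B _ P =>
  Tfam (((unionP P).powerset).filter fun S =>
    S.sum c ≤ k * B ∧
    ∀ S' ∈ (unionP P).powerset, S'.sum c ≤ k * B → reprScore n P S' ≤ reprScore n P S)

/-- The geometric median of a set of projects w.r.t. a distance `δ`. -/
noncomputable def med (δ : ℕ → ℕ → ℝ) (V : Finset ℕ) : ℕ :=
  Tproj (V.filter fun p => ∀ q ∈ V, V.sum (fun x => δ p x) ≤ V.sum (fun x => δ q x))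

def IsPartition (V : Finset (Finset ℕ)) (P : Finset ℕ) : Prop :=
  (∀ v ∈ V, v.Nonempty) ∧ V.sup id = P ∧ ∀ v ∈ V, ∀ w ∈ V, v ≠ w → Disjoint v w

/-- `(k, ℓ)`-Voronoï partitions w.r.t. `δ`. -/
def IsVoronoi (δ : ℕ → ℕ → ℝ) (c : ℕ → ℕ) (B k : ℕ) (ℓ : ℝ)
    (V : Finset (Finset ℕ)) (P : Finset ℕ) : Prop :=
  IsPartition V P ∧ (V.sum fun v => c (med δ v)) ≤ k * B ∧
  ∀ v ∈ V, ∀ p ∈ v,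
    (∀ w ∈ V, w ≠ v → δ p (med δ v) ≤ δ p (med δ w)) ∧ δ p (med δ v) ≤ ℓ

/-- The smallest `ℓ` such that a `(k, ℓ)`-Voronoï partition of `P` exists. -/
noncomputable def lstar (δ : ℕ → ℕ → ℝ) (c : ℕ → ℕ) (B k : ℕ) (P : Finset ℕ) : ℝ :=
  sInf {ℓ : ℝ | ∃ V : Finset (Finset ℕ), IsVoronoi δ c B k ℓ V P}

/-- The `k`-median shortlisting rule w.r.t. the distance `δ`. -/
noncomputable def kMedian (δ : ℕ → ℕ → ℝ) (k : ℕ) : ShortRule := fun _ c B _ P =>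
  Tfam ((((unionP P).powerset.powerset).filter fun V =>
    IsVoronoi δ c B k (lstar δ c B k (unionP P)) V (unionP P)).image fun V => V.image (med δ))

/-- `δ` is a metric (on the universe of conceivable projects). -/
def IsMetric (δ : ℕ → ℕ → ℝ) : Prop :=
  (∀ p q, δ p q = 0 ↔ p = q) ∧ (∀ p q, δ p q = δ q p) ∧ ∀ p q r, δ p r ≤ δ p q + δ q r

/-- The approval score of project `p` in profile `A`. -/
def appScore {n : ℕ} (A : Profile n) (p : ℕ) : ℕ :=
  (Finset.univ.filter fun i => p ∈ A i).card

/-- The greedy-approval allocation rule. -/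
noncomputable def greedyApproval : AllocRule := fun _ c B Sh A =>
  GREED c B Sh fun p q => appScore A q < appScore A p ∨ (appScore A p = appScore A q ∧ p < q)

/-- The approval-maximising allocation rule (canonical tie-breaking). -/
noncomputable def approvalMax : AllocRule := fun _ c B Sh A =>
  Tfam ((Sh.powerset).filter fun S =>
    S.sum c ≤ B ∧ ∀ S' ∈ Sh.powerset, S'.sum c ≤ B → S'.sum (appScore A) ≤ S.sum (appScore A))

/-- `A` is an exhaustive budget allocation for the instance `⟨Sh, c, B⟩`. -/
def ExhaustiveAlloc (c : ℕ → ℕ) (B : ℕ) (Sh A : Finset ℕ) : Prop :=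
  A ⊆ Sh ∧ A.sum c ≤ B ∧ ∀ p ∈ Sh, p ∉ A → ¬ (A.sum c + c p ≤ B)

/-- An allocation rule is exhaustive if it always returns an exhaustive allocation. -/
def ExhaustiveRule (F : AllocRule) : Prop :=
  ∀ (n : ℕ) (c : ℕ → ℕ) (B : ℕ) (Sh : Finset ℕ) (A : Profile n),
    (∀ j, A j ⊆ Sh) → ExhaustiveAlloc c B Sh (F n c B Sh A)

/-- Unanimity of an allocation rule. -/
def Unanimous (F : AllocRule) : Prop :=
  ∀ (n : ℕ) (c : ℕ → ℕ) (B : ℕ) (Sh : Finset ℕ) (a : Finset ℕ),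
    a ⊆ Sh → a.sum c ≤ B → a ⊆ F n c B Sh (fun _ => a)

/-- Strong unanimity of an allocation rule. -/
def StronglyUnanimous (F : AllocRule) : Prop :=
  ∀ (n : ℕ) (c : ℕ → ℕ) (B : ℕ) (Sh : Finset ℕ) (i : Fin n) (a : Finset ℕ) (A : Profile n),
    3 ≤ n → a ⊆ Sh → a.sum c ≤ B → (∀ j, j ≠ i → A j = a) → a ⊆ F n c B Sh A

/-- A preference model: given the cost function and an ideal set, the utility
of a budget allocation.  `overlapU` and `costU` are the two models used. -/
abbrev PrefModel := (ℕ → ℕ) → Finset ℕ → Finset ℕ → ℕ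

def overlapU : PrefModel := fun _ P A => (A ∩ P).card
def costU : PrefModel := fun c P A => (A ∩ P).sum c

/-- Budget allocations reachable by agent `i` by changing her own ballot. -/
noncomputable def reachable (n : ℕ) (c : ℕ → ℕ) (B : ℕ) (F : AllocRule)
    (Sh : Finset ℕ) (A : Profile n) (i : Fin n) : Finset (Finset ℕ) :=
  (Sh.powerset).image fun b => F n c B Sh (Function.update A i b)

/-- The best response `A*_i(I, A, F)` of agent `i` (with preference order `r`). -/
noncomputable def Astar (U : PrefModel) (n : ℕ) (c : ℕ → ℕ) (B : ℕ) (F : AllocRule)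
    (r : ℕ → ℕ → Prop) (Sh : Finset ℕ) (A : Profile n) (i : Fin n) : Finset ℕ :=
  Tfam ((reachable n c B F Sh A i).filter fun X =>
    ∀ Y ∈ reachable n c B F Sh A i, U c (GREED c B Sh r) Y ≤ U c (GREED c B Sh r) X)

/-- `F*(I, A)`: the outcome after agent `i` best-responds to profile `A`. -/
noncomputable def Fstar (U : PrefModel) (n : ℕ) (c : ℕ → ℕ) (B : ℕ) (F : AllocRule)
    (r : ℕ → ℕ → Prop) (Sh : Finset ℕ) (A : Profile n) (i : Fin n) : Finset ℕ :=
  F n c B Sh (Function.update A i (Astar U n c B F r Sh A i))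

/-- `Pi'` is a successful pessimistic manipulation for agent `i` (base profile `P`). -/
def SuccPess (U : PrefModel) (R : ShortRule) (F : AllocRule) (n : ℕ) (c : ℕ → ℕ) (B : ℕ)
    (ℙ : Finset ℕ) (prefs : Fin n → ℕ → ℕ → Prop) (P : Profile n) (i : Fin n)
    (Pi' : Finset ℕ) : Prop :=
  let Sh := R n c B ℙ P
  let Sh' := R n c B ℙ (Function.update P i Pi')
  let tp := GREED c B (Sh ∪ Sh') (prefs i)
  (∀ A A' : Profile n, (∀ j, A j ⊆ Sh) → (∀ j, A' j ⊆ Sh') →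
      U c tp (Fstar U n c B F (prefs i) Sh A i) ≤ U c tp (Fstar U n c B F (prefs i) Sh' A' i)) ∧
  ∃ A A' : Profile n, (∀ j, A j ⊆ Sh) ∧ (∀ j, A' j ⊆ Sh') ∧
      U c tp (Fstar U n c B F (prefs i) Sh A i) < U c tp (Fstar U n c B F (prefs i) Sh' A' i)

/-- `Pi'` is a successful optimistic manipulation for agent `i` (base profile `P`). -/
def SuccOpt (U : PrefModel) (R : ShortRule) (F : AllocRule) (n : ℕ) (c : ℕ → ℕ) (B : ℕ)
    (ℙ : Finset ℕ) (prefs : Fin n → ℕ → ℕ → Prop) (P : Profile n) (i : Fin n)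
    (Pi' : Finset ℕ) : Prop :=
  let Sh := R n c B ℙ P
  let Sh' := R n c B ℙ (Function.update P i Pi')
  let tp := GREED c B (Sh ∪ Sh') (prefs i)
  ∃ A A' : Profile n, (∀ j, A j ⊆ Sh) ∧ (∀ j, A' j ⊆ Sh') ∧
      U c tp (Fstar U n c B F (prefs i) Sh A i) < U c tp (Fstar U n c B F (prefs i) Sh' A' i)

/-- `Pi'` is a successful anticipative manipulation for agent `i` (base profile `P`). -/
def SuccAnt (U : PrefModel) (R : ShortRule) (F : AllocRule) (n : ℕ) (c : ℕ → ℕ) (B : ℕ)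
    (ℙ : Finset ℕ) (prefs : Fin n → ℕ → ℕ → Prop) (P : Profile n) (i : Fin n)
    (Pi' : Finset ℕ) : Prop :=
  let Sh := R n c B ℙ P
  let Sh' := R n c B ℙ (Function.update P i Pi')
  let tp := GREED c B (Sh ∪ Sh') (prefs i)
  U c tp (Fstar U n c B F (prefs i) Sh (fun j => GREED c B Sh (prefs j)) i)
    < U c tp (Fstar U n c B F (prefs i) Sh' (fun j => GREED c B Sh' (prefs j)) i)

section FSSP

variable (U : PrefModel) (R : ShortRule) (F : AllocRule)

/-- First-stage strategyproofness, awareness-restricted, pessimistic. -/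
def R_FSSP_P : Prop :=
  ∀ (n : ℕ) (c : ℕ → ℕ) (B : ℕ) (ℙ : Finset ℕ) (prefs : Fin n → ℕ → ℕ → Prop)
    (C P : Profile n) (i : Fin n) (Pi' : Finset ℕ),
    (∀ p ∈ ℙ, c p ≤ B) → (∀ j, IsStrictTotalOrder ℕ (prefs j)) →
    (∀ j, C j ⊆ ℙ) → (∀ j, P j ⊆ C j) → Pi' ⊆ C i →
    ¬ SuccPess U R F n c B ℙ prefs (Function.update P i (GREED c B (C i) (prefs i))) i Pi'

/-- First-stage strategyproofness, awareness-restricted, optimistic. -/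
def R_FSSP_O : Prop :=
  ∀ (n : ℕ) (c : ℕ → ℕ) (B : ℕ) (ℙ : Finset ℕ) (prefs : Fin n → ℕ → ℕ → Prop)
    (C P : Profile n) (i : Fin n) (Pi' : Finset ℕ),
    (∀ p ∈ ℙ, c p ≤ B) → (∀ j, IsStrictTotalOrder ℕ (prefs j)) →
    (∀ j, C j ⊆ ℙ) → (∀ j, P j ⊆ C j) → Pi' ⊆ C i →
    ¬ SuccOpt U R F n c B ℙ prefs (Function.update P i (GREED c B (C i) (prefs i))) i Pi'

/-- First-stage strategyproofness, awareness-restricted, anticipative. -/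
def R_FSSP_A : Prop :=
  ∀ (n : ℕ) (c : ℕ → ℕ) (B : ℕ) (ℙ : Finset ℕ) (prefs : Fin n → ℕ → ℕ → Prop)
    (C P : Profile n) (i : Fin n) (Pi' : Finset ℕ),
    (∀ p ∈ ℙ, c p ≤ B) → (∀ j, IsStrictTotalOrder ℕ (prefs j)) →
    (∀ j, C j ⊆ ℙ) → (∀ j, P j ⊆ C j) → Pi' ⊆ C i →
    ¬ SuccAnt U R F n c B ℙ prefs (Function.update P i (GREED c B (C i) (prefs i))) i Pi'

/-- First-stage strategyproofness, unrestricted, pessimistic. -/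
def U_FSSP_P : Prop :=
  ∀ (n : ℕ) (c : ℕ → ℕ) (B : ℕ) (ℙ : Finset ℕ) (prefs : Fin n → ℕ → ℕ → Prop)
    (C P : Profile n) (i : Fin n) (Pi' : Finset ℕ),
    (∀ p ∈ ℙ, c p ≤ B) → (∀ j, IsStrictTotalOrder ℕ (prefs j)) →
    (∀ j, C j ⊆ ℙ) → (∀ j, P j ⊆ C j) → Pi' ⊆ C i ∪ unionP P →
    ¬ SuccPess U R F n c B ℙ prefs
        (Function.update P i (GREED c B (C i ∪ unionP P) (prefs i))) i Pi'

/-- First-stage strategyproofness, unrestricted, optimistic. -/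
def U_FSSP_O : Prop :=
  ∀ (n : ℕ) (c : ℕ → ℕ) (B : ℕ) (ℙ : Finset ℕ) (prefs : Fin n → ℕ → ℕ → Prop)
    (C P : Profile n) (i : Fin n) (Pi' : Finset ℕ),
    (∀ p ∈ ℙ, c p ≤ B) → (∀ j, IsStrictTotalOrder ℕ (prefs j)) →
    (∀ j, C j ⊆ ℙ) → (∀ j, P j ⊆ C j) → Pi' ⊆ C i ∪ unionP P →
    ¬ SuccOpt U R F n c B ℙ prefs
        (Function.update P i (GREED c B (C i ∪ unionP P) (prefs i))) i Pi'

/-- First-stage strategyproofness, unrestricted, anticipative. -/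
def U_FSSP_A : Prop :=
  ∀ (n : ℕ) (c : ℕ → ℕ) (B : ℕ) (ℙ : Finset ℕ) (prefs : Fin n → ℕ → ℕ → Prop)
    (C P : Profile n) (i : Fin n) (Pi' : Finset ℕ),
    (∀ p ∈ ℙ, c p ≤ B) → (∀ j, IsStrictTotalOrder ℕ (prefs j)) →
    (∀ j, C j ⊆ ℙ) → (∀ j, P j ⊆ C j) → Pi' ⊆ C i ∪ unionP P →
    ¬ SuccAnt U R F n c B ℙ prefs
        (Function.update P i (GREED c B (C i ∪ unionP P) (prefs i))) i Pi'

end FSSP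

/-- Costs of the witnessing instance: `c(p₁)=c(p₂)=c(p₃)=4`,
`c(p₄)=c(p₅)=6`, `c(p₆)=c(p₇)=c(p₈)=3`. -/
def c18 : ℕ → ℕ := fun p => if p ≤ 3 then 4 else if p ≤ 5 then 6 else 3

/-- The eight projects of the witnessing instance (budget `B = 12`). -/
def P18 : Finset ℕ := {1, 2, 3, 4, 5, 6, 7, 8}

/-!
Under the truthful profile every approved project has score one and no four projects fit in
the budget, so many allocations attain the maximal score three; canonical tie-breaking picks
`{p₁, p₂, p₃}`, which misses agent 1's ideal set `{p₆, p₇, p₈}`, so adding one project gives her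
overlap at most one and cost at most three. Approving `p₅` as well raises its score to two and
makes `{p₅, p₆, p₇}` (score four) the unique optimum, with overlap two and cost six.
-/

lemma first_eq_of_forall {r : ℕ → ℕ → Prop} (hr : ∀ a b, r a b → ¬ r b a) {P : Finset ℕ}
    {p : ℕ} (hp : p ∈ P) (h : ∀ q ∈ P, q ≠ p → r p q) : first r P = p := by
  have hex : ∃ p ∈ P, ∀ q ∈ P, q ≠ p → r p q := ⟨p, hp, h⟩
  rw [first, dif_pos hex]
  obtain ⟨hmem, hspec⟩ := hex.choose_spec
  by_contra hne
  exact hr _ _ (h _ hmem hne) (hspec p hp (Ne.symm hne))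

def greedyList (c : ℕ → ℕ) : List ℕ → ℕ → Finset ℕ
  | [], _ => ∅
  | p :: l, b => if c p ≤ b then insert p (greedyList c l (b - c p)) else greedyList c l b

lemma greedyAux_toFinset {c : ℕ → ℕ} {r : ℕ → ℕ → Prop} (hr : ∀ a b, r a b → ¬ r b a) :
    ∀ {l : List ℕ}, l.Pairwise r → ∀ b, greedyAux c r l.length l.toFinset b = greedyList c l b
  | [], _, _ => rfl
  | p :: l, hl, b => by
    obtain ⟨hp, hl⟩ := List.pairwise_cons.mp hl
    have hfirst : first r (p :: l).toFinset = p :=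
      first_eq_of_forall hr (by simp) fun q hq hqp => hp q (by simpa [hqp] using hq)
    have herase : (p :: l).toFinset.erase p = l.toFinset := by
      rw [List.toFinset_cons, Finset.erase_insert]
      intro hpl
      have hpp := hp p (List.mem_toFinset.mp hpl)
      exact hr p p hpp hpp
    simp only [List.length_cons, greedyAux, List.toFinset_nonempty_iff, ne_eq, reduceCtorEq,
      not_false_eq_true, if_true, hfirst, herase, greedyList, greedyAux_toFinset hr hl]

lemma GREED_toFinset {c : ℕ → ℕ} {B : ℕ} {r : ℕ → ℕ → Prop} (hr : ∀ a b, r a b → ¬ r b a)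
    {l : List ℕ} (hl : l.Pairwise r) : GREED c B l.toFinset r = greedyList c l B := by
  have hnodup : l.Nodup := hl.imp fun {a _} hab heq => by subst heq; exact hr a a hab hab
  rw [GREED, List.toFinset_card_of_nodup hnodup, greedyAux_toFinset hr hl]

def LexBefore (P Q : Finset ℕ) : Prop := ∃ m ∈ P, m ∉ Q ∧ ∀ i ∈ Q, i ∉ P → m < i

instance : DecidableRel LexBefore := fun P Q => by unfold LexBefore; infer_instance

lemma enc_lt_pow_of_forall_lt (S : Finset ℕ) :
    ∀ m, (∀ i ∈ S, m < i) → enc S < (1 / 2 : ℚ) ^ m := by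
  induction S using Finset.induction_on_min with
  | empty => intro m _; simp [enc]
  | insert a S haS ih =>
    intro m hm
    have hmem : a ∉ S := fun h => lt_irrefl a (haS a h)
    have htail : enc S < (1 / 2 : ℚ) ^ a := ih a haS
    have hpow : (1 / 2 : ℚ) ^ a ≤ (1 / 2) ^ (m + 1) :=
      pow_le_pow_of_le_one (by norm_num) (by norm_num) (hm a (Finset.mem_insert_self a S))
    calc enc (insert a S) = (1 / 2 : ℚ) ^ a + enc S := Finset.sum_insert hmem
      _ < 2 * (1 / 2 : ℚ) ^ (m + 1) := by linarith
      _ = (1 / 2 : ℚ) ^ m := by ring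

lemma enc_lt_enc_of_lexBefore {P Q : Finset ℕ} (h : LexBefore P Q) : enc Q < enc P := by
  obtain ⟨m, hmP, hmQ, hlt⟩ := h
  have hsplit : enc (Q ∩ P) + enc (Q \ P) = enc Q := Finset.sum_inter_add_sum_sdiff Q P _
  have htail : enc (Q \ P) < (1 / 2 : ℚ) ^ m :=
    enc_lt_pow_of_forall_lt _ m fun i hi =>
      hlt i (Finset.mem_sdiff.mp hi).1 (Finset.mem_sdiff.mp hi).2
  have hins : enc (insert m (Q ∩ P)) = (1 / 2 : ℚ) ^ m + enc (Q ∩ P) :=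
    Finset.sum_insert fun h => hmQ (Finset.mem_inter.mp h).1
  have hsub : enc (insert m (Q ∩ P)) ≤ enc P :=
    Finset.sum_le_sum_of_subset_of_nonneg (Finset.insert_subset hmP Finset.inter_subset_right)
      fun i _ _ => by positivity
  linarith

lemma Tfam_eq_of_lexBefore {𝔓 : Finset (Finset ℕ)} {P : Finset ℕ} (hP : P ∈ 𝔓)
    (hlex : ∀ Q ∈ 𝔓, Q ≠ P → LexBefore P Q) : Tfam 𝔓 = P := by
  have hle : ∀ Q ∈ 𝔓, enc Q ≤ enc P := fun Q hQ => by
    rcases eq_or_ne Q P with rfl | hne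
    · exact le_rfl
    · exact (enc_lt_enc_of_lexBefore (hlex Q hQ hne)).le
  have hex : ∃ X ∈ 𝔓, ∀ Q ∈ 𝔓, enc Q ≤ enc X := ⟨P, hP, hle⟩
  rw [Tfam, dif_pos hex]
  obtain ⟨hmem, hspec⟩ := hex.choose_spec
  by_contra hne
  exact (enc_lt_enc_of_lexBefore (hlex _ hmem hne)).not_ge (hspec P hP)

/-- Rank of a project for an agent who puts the projects of `l` first, in that order, and then
all others by index. -/
def rankKey (l : List ℕ) (p : ℕ) : ℕ := if p ∈ l then l.idxOf p else l.length + p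

lemma rankKey_injective (l : List ℕ) : Function.Injective (rankKey l) := by
  intro p q h
  unfold rankKey at h
  split_ifs at h with hpl hql hql
  · exact (List.idxOf_inj hpl).mp h
  · have := List.idxOf_lt_length_iff.mpr hpl
    omega
  · have := List.idxOf_lt_length_iff.mpr hql
    omega
  · omega

def rankedBefore (l : List ℕ) (p q : ℕ) : Prop := rankKey l p < rankKey l q

instance (l : List ℕ) : DecidableRel (rankedBefore l) := fun p q =>
  Nat.decLt (rankKey l p) (rankKey l q)

lemma isStrictTotalOrder_rankedBefore (l : List ℕ) : IsStrictTotalOrder ℕ (rankedBefore l) :=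
  (rankKey_injective l).isStrictTotalOrder_onFun (r := (· < ·))

lemma rankedBefore_asymm (l : List ℕ) (a b : ℕ) (h : rankedBefore l a b) :
    ¬ rankedBefore l b a :=
  lt_asymm (α := ℕ) h

def ranking : Fin 3 → List ℕ := ![[6, 7, 8], [4, 5], [1, 2, 3]]

def truthful : Profile 3 := ![{6, 7, 8}, {4, 5}, {1, 2, 3}]

def manipulated : Profile 3 := Function.update truthful 0 {5, 6, 7}

lemma GREED_rankedBefore (j : Fin 3) :
    GREED c18 12 P18 (rankedBefore (ranking j)) = truthful j := by
  have hP : P18 = (ranking j ++ (List.range' 1 8).filter (· ∉ ranking j)).toFinset := by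
    fin_cases j <;> decide
  rw [hP, GREED_toFinset (rankedBefore_asymm _) (by fin_cases j <;> decide)]
  fin_cases j <;> decide

set_option maxRecDepth 100000 in
lemma approvalMax_manipulated : approvalMax 3 c18 12 P18 manipulated = {5, 6, 7} :=
  Tfam_eq_of_lexBefore (by decide) (by decide)

set_option maxRecDepth 100000 in
lemma approvalMax_truthful : approvalMax 3 c18 12 P18 truthful = {1, 2, 3} :=
  Tfam_eq_of_lexBefore (by decide) (by decide)

/-- The approval-maximising rule (canonical tie-breaking) is not
approximately strategyproof, under both the overlap and the cost preference
models, witnessed by the described instance where agent 1 (with preferences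
`p₆ ▷ p₇ ▷ p₈ ▷ …`) submits `{p₅, p₆, p₇}` instead of `{p₆, p₇, p₈}`. -/
theorem approvalMax_not_approx_SP :
    ∃ prefs : Fin 3 → ℕ → ℕ → Prop,
      (∀ j, IsStrictTotalOrder ℕ (prefs j)) ∧
      (prefs 0 6 7 ∧ prefs 0 7 8 ∧ ∀ q ∈ P18, q ∉ ({6, 7, 8} : Finset ℕ) → prefs 0 8 q) ∧
      (prefs 1 4 5 ∧ ∀ q ∈ P18, q ∉ ({4, 5} : Finset ℕ) → prefs 1 5 q) ∧
      (prefs 2 1 2 ∧ prefs 2 2 3 ∧ ∀ q ∈ P18, q ∉ ({1, 2, 3} : Finset ℕ) → prefs 2 3 q) ∧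
      ∃ (A : Profile 3) (i : Fin 3),
        i = 0 ∧ (∀ j, A j ⊆ P18) ∧
        A i = ({5, 6, 7} : Finset ℕ) ∧
        A i ≠ GREED c18 12 P18 (prefs i) ∧
        (∀ j, j ≠ i → A j = GREED c18 12 P18 (prefs j)) ∧
        ∀ p ∈ P18,
          overlapU c18 (GREED c18 12 P18 (prefs i))
              (insert p (approvalMax 3 c18 12 P18
                (Function.update A i (GREED c18 12 P18 (prefs i))))) <
            overlapU c18 (GREED c18 12 P18 (prefs i)) (approvalMax 3 c18 12 P18 A) ∧
          costU c18 (GREED c18 12 P18 (prefs i))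
              (insert p (approvalMax 3 c18 12 P18
                (Function.update A i (GREED c18 12 P18 (prefs i))))) <
            costU c18 (GREED c18 12 P18 (prefs i)) (approvalMax 3 c18 12 P18 A) := by
  refine ⟨fun j => rankedBefore (ranking j), fun j => isStrictTotalOrder_rankedBefore _,
    by decide, by decide, by decide, manipulated, 0, rfl, by decide, rfl, ?_, ?_, ?_⟩
  · rw [GREED_rankedBefore]
    decide
  · intro j hj
    rw [GREED_rankedBefore, manipulated, Function.update_of_ne hj]
  · rw [GREED_rankedBefore, approvalMax_manipulated, manipulated, Function.update_idem,
      Function.update_eq_self, approvalMax_truthful]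
    decide

end PB
end

section
/- There exists a tie-breaking order over budget allocations for which the resulting approval-maximising rule fails to be strategyproof even on unit-cost allocation instances, under both the overlap preference model and the cost preference model: there exist a unit-cost allocation instance I = ⟨𝒫, c, B⟩, a strict linear order τ on the subsets of 𝒫, an approval profile A, and an agent i such that the rule F_τ(I, A) = τ-first element of argmax over feasible budget allocations A of Σ_{p∈A} n_p^A satisfies F_τ(I, A') ≻_{top_i(𝒫)} F_τ(I, (A'_{-i}, top_i(𝒫))) for some ballot A'_i ≠ top_i(𝒫). In particular, this is witnessed by the instance with 𝒫 = {p_1, …, p_7}, all costs equal to 1, B = 4, two agents with preference orders p_1 ▷_1 p_2 ▷_1 p_3 ▷_1 p_4 ▷_1 … and p_4 ▷_2 p_5 ▷_2 p_6 ▷_2 p_7 ▷_2 …, and a tie-breaking order placing {p_1, p_2, p_3, p_5} first and {p_4, p_5, p_6, p_7} second, where agent 1 submits {p_1, p_2, p_3} instead of {p_1, p_2, p_3, p_4}. -/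
/-!
With unit costs `GREED` selects the `B` first projects of an order, so the ideal sets of the two
agents are `{1, 2, 3, 4}` and `{4, 5, 6, 7}`. Under sincere ballots project 4 has two approvals,
so every approval-maximising allocation contains it and the tie-breaking picks `{4, 5, 6, 7}`,
which meets agent 1's ideal set in one project only. If agent 1 leaves project 4 off her ballot,
all seven projects have one approval, every four-element set is optimal, and the tie-breaking
picks `{1, 2, 3, 5}`, which meets her ideal set in three projects.
-/

open Finset

namespace PB

open scoped Classical

/-- Unit costs for the witnessing instance. -/
def c19 : ℕ → ℕ := fun _ => 1

/-- The seven projects of the witnessing instance (budget `B = 4`). -/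
def P19 : Finset ℕ := {1, 2, 3, 4, 5, 6, 7}

/-- The approval-maximising rule with an arbitrary tie-breaking order `τ` over
budget allocations: the `τ`-first feasible allocation maximising total approval. -/
noncomputable def approvalMaxTau (τ : Finset ℕ → Finset ℕ → Prop)
    (n : ℕ) (c : ℕ → ℕ) (B : ℕ) (Sh : Finset ℕ) (A : Profile n) : Finset ℕ :=
  let M := (Sh.powerset).filter fun S =>
    S.sum c ≤ B ∧ ∀ S' ∈ Sh.powerset, S'.sum c ≤ B → S'.sum (appScore A) ≤ S.sum (appScore A)
  if h : ∃ S ∈ M, ∀ S' ∈ M, S' ≠ S → τ S S' then h.choose else ∅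

theorem exists_forall_ne_rel_of_nonempty {α : Type*} {r : α → α → Prop}
    [IsStrictTotalOrder α r] {P : Finset α} (hP : P.Nonempty) :
    ∃ p ∈ P, ∀ q ∈ P, q ≠ p → r p q := by
  induction hP using Finset.Nonempty.cons_induction with
  | singleton a => exact ⟨a, mem_singleton_self a, fun q hq hqa => absurd (mem_singleton.1 hq) hqa⟩
  | cons a s has _ ih =>
    obtain ⟨m, hms, hm⟩ := ih
    rcases trichotomous_of r a m with ham | rfl | hma
    · refine ⟨a, mem_cons_self a s, fun q hq hqa => ?_⟩
      obtain rfl | hqs := mem_cons.1 hq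
      · exact absurd rfl hqa
      obtain rfl | hqm := eq_or_ne q m
      · exact ham
      · exact _root_.trans ham (hm q hqs hqm)
    · exact absurd hms has
    · refine ⟨m, mem_cons.2 (Or.inr hms), fun q hq hqm => ?_⟩
      obtain rfl | hqs := mem_cons.1 hq
      · exact hma
      · exact hm q hqs hqm

theorem first_spec {r : ℕ → ℕ → Prop} [IsStrictTotalOrder ℕ r] {P : Finset ℕ}
    (hP : P.Nonempty) : first r P ∈ P ∧ ∀ q ∈ P, q ≠ first r P → r (first r P) q := by
  have h := exists_forall_ne_rel_of_nonempty (r := r) hP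
  rw [first, dif_pos h]
  exact h.choose_spec

section Greedy

variable {r : ℕ → ℕ → Prop} [IsStrictTotalOrder ℕ r] [DecidableRel r]

theorem greedyAux_card_of_unit_cost {c : ℕ → ℕ} {P : Finset ℕ} (hc : ∀ p ∈ P, c p = 1)
    (b : ℕ) : greedyAux c r #P P b = {p ∈ P | #{q ∈ P | r q p} < b} := by
  induction hk : #P generalizing P b with
  | zero => simp [card_eq_zero.1 hk, greedyAux]
  | succ k ih =>
    have hP : P.Nonempty := card_pos.1 (by omega)
    rw [greedyAux, if_pos hP]
    obtain ⟨hpP, hp⟩ := first_spec (r := r) hP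
    set p := first r P
    have ih' (b' : ℕ) := ih (fun q hq => hc q (mem_of_mem_erase hq)) b'
      (by rw [card_erase_of_mem hpP, hk]; rfl)
    rw [hc p hpP]
    split_ifs with hb
    · have hfirst_rank : #{x ∈ P | r x p} = 0 := by
        refine card_eq_zero.2 (filter_eq_empty_iff.2 fun x hx hxp => ?_)
        obtain rfl | hne := eq_or_ne x p
        · exact irrefl _ hxp
        · exact asymm hxp (hp x hx hne)
      have hrank (q : ℕ) (hq : q ∈ P.erase p) :
          #{x ∈ P | r x q} = #{x ∈ P.erase p | r x q} + 1 := by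
        have hpq : p ∈ {x ∈ P | r x q} :=
          mem_filter.2 ⟨hpP, hp q (mem_of_mem_erase hq) (ne_of_mem_erase hq)⟩
        rw [filter_erase, card_erase_add_one hpq]
      rw [ih', ← insert_erase (mem_filter.2 ⟨hpP, (by omega : #{x ∈ P | r x p} < b)⟩),
        ← filter_erase]
      refine congrArg (insert p) (filter_congr fun q hq => ?_)
      rw [hrank q hq]
      omega
    · obtain rfl : b = 0 := by omega
      simp [ih']

theorem GREED_of_unit_cost {c : ℕ → ℕ} {B : ℕ} {P : Finset ℕ} (hc : ∀ p ∈ P, c p = 1) :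
    GREED c B P r = {p ∈ P | #{q ∈ P | r q p} < B} :=
  greedyAux_card_of_unit_cost hc B

end Greedy

section ListFirst

variable {α : Type*} [DecidableEq α]

def frontRank (l : List α) (e : α → ℕ) (a : α) : ℕ :=
  if a ∈ l then l.idxOf a else l.length + e a

theorem frontRank_injective (l : List α) {e : α → ℕ} (he : Function.Injective e) :
    Function.Injective (frontRank l e) := by
  intro a b hab
  unfold frontRank at hab
  split_ifs at hab with ha hb hb
  · exact (List.idxOf_inj ha).1 hab
  · have := List.idxOf_lt_length_iff.2 ha
    omega
  · have := List.idxOf_lt_length_iff.2 hb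
    omega
  · exact he (by omega)

abbrev listFirstOrder (l : List α) (e : α → ℕ) : α → α → Prop :=
  Function.onFun (· < ·) (frontRank l e)

theorem isStrictTotalOrder_listFirstOrder (l : List α) {e : α → ℕ}
    (he : Function.Injective e) : IsStrictTotalOrder α (listFirstOrder l e) :=
  (frontRank_injective l he).isStrictTotalOrder_onFun (r := (· < ·))

theorem listFirstOrder_of_idxOf_lt {l : List α} {e : α → ℕ} {a b : α} (ha : a ∈ l)
    (hab : l.idxOf a < l.idxOf b) : listFirstOrder l e a b := by
  show frontRank l e a < frontRank l e b
  unfold frontRank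
  by_cases hb : b ∈ l
  · simpa [ha, hb] using hab
  · have := List.idxOf_lt_length_iff.2 ha
    simp only [ha, hb, if_true, if_false]
    omega

end ListFirst

def approvalOptima (n : ℕ) (c : ℕ → ℕ) (B : ℕ) (Sh : Finset ℕ) (A : Profile n) :
    Finset (Finset ℕ) :=
  (Sh.powerset).filter fun S =>
    S.sum c ≤ B ∧ ∀ S' ∈ Sh.powerset, S'.sum c ≤ B → S'.sum (appScore A) ≤ S.sum (appScore A)

theorem approvalMaxTau_eq_of_forall_rel {τ : Finset ℕ → Finset ℕ → Prop}
    [Std.Asymm τ] {n : ℕ} {c : ℕ → ℕ} {B : ℕ} {Sh : Finset ℕ} {A : Profile n}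
    {S₀ : Finset ℕ} (h₀ : S₀ ∈ approvalOptima n c B Sh A)
    (hfirst : ∀ S ∈ approvalOptima n c B Sh A, S ≠ S₀ → τ S₀ S) :
    approvalMaxTau τ n c B Sh A = S₀ := by
  have hex : ∃ S ∈ approvalOptima n c B Sh A, ∀ S' ∈ approvalOptima n c B Sh A,
      S' ≠ S → τ S S' := ⟨S₀, h₀, hfirst⟩
  have hchoose : approvalMaxTau τ n c B Sh A = hex.choose := dif_pos hex
  rw [hchoose]
  obtain ⟨hmem, hleast⟩ := hex.choose_spec
  by_contra hne
  exact asymm (hleast S₀ h₀ (Ne.symm hne)) (hfirst _ hmem hne)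

def tieBreak : Finset ℕ → Finset ℕ → Prop :=
  listFirstOrder [{1, 2, 3, 5}, {4, 5, 6, 7}] Encodable.encode

instance : IsStrictTotalOrder (Finset ℕ) tieBreak :=
  isStrictTotalOrder_listFirstOrder _ Encodable.encode_injective

theorem tieBreak_first (S : Finset ℕ) (hS : S ≠ {1, 2, 3, 5}) : tieBreak {1, 2, 3, 5} S := by
  refine listFirstOrder_of_idxOf_lt (by simp) ?_
  simp [List.idxOf_cons_ne _ hS.symm]

theorem tieBreak_second (S : Finset ℕ) (h₁ : S ≠ {1, 2, 3, 5}) (h₂ : S ≠ {4, 5, 6, 7}) :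
    tieBreak {4, 5, 6, 7} S := by
  refine listFirstOrder_of_idxOf_lt (by simp) ?_
  rw [List.idxOf_cons_ne _ h₁.symm, List.idxOf_cons_ne _ h₂.symm, List.idxOf_nil]
  decide

instance (l : List ℕ) : IsStrictTotalOrder ℕ (listFirstOrder l id) :=
  isStrictTotalOrder_listFirstOrder l Function.injective_id

def agentTop : Fin 2 → List ℕ := ![[1, 2, 3, 4], [4, 5, 6, 7]]

abbrev agentOrder (j : Fin 2) : ℕ → ℕ → Prop := listFirstOrder (agentTop j) id

def sincereBallots : Profile 2 := ![{1, 2, 3, 4}, {4, 5, 6, 7}]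
def insincereBallots : Profile 2 := ![{1, 2, 3}, {4, 5, 6, 7}]

set_option maxRecDepth 100000 in
theorem approvalMaxTau_insincere :
    approvalMaxTau tieBreak 2 c19 4 P19 insincereBallots = {1, 2, 3, 5} :=
  approvalMaxTau_eq_of_forall_rel (by decide) fun S _ hS => tieBreak_first S hS

set_option maxRecDepth 100000 in
theorem approvalMaxTau_sincere :
    approvalMaxTau tieBreak 2 c19 4 P19 sincereBallots = {4, 5, 6, 7} := by
  have h4 : {1, 2, 3, 5} ∉ approvalOptima 2 c19 4 P19 sincereBallots := by decide
  exact approvalMaxTau_eq_of_forall_rel (by decide) fun S hS h₂ =>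
    tieBreak_second S (ne_of_mem_of_not_mem hS h4) h₂

theorem GREED_agentOrder_zero : GREED c19 4 P19 (agentOrder 0) = {1, 2, 3, 4} := by
  rw [GREED_of_unit_cost (c := c19) fun _ _ => rfl]
  decide

theorem GREED_agentOrder_one : GREED c19 4 P19 (agentOrder 1) = {4, 5, 6, 7} := by
  rw [GREED_of_unit_cost (c := c19) fun _ _ => rfl]
  decide

theorem update_insincereBallots :
    Function.update insincereBallots 0 {1, 2, 3, 4} = sincereBallots := by
  decide

/-- some tie-breaking order over budget allocations makes the
approval-maximising rule fail strategyproofness even on unit-cost instances,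
under both preference models; witnessed by the described instance where the
tie-breaking places `{p₁,p₂,p₃,p₅}` first and `{p₄,p₅,p₆,p₇}` second and
agent 1 submits `{p₁,p₂,p₃}` instead of `{p₁,p₂,p₃,p₄}`. -/
theorem approvalMaxTau_not_SP_unit :
    ∃ (τ : Finset ℕ → Finset ℕ → Prop) (prefs : Fin 2 → ℕ → ℕ → Prop),
      IsStrictTotalOrder (Finset ℕ) τ ∧ (∀ j, IsStrictTotalOrder ℕ (prefs j)) ∧
      (∀ S : Finset ℕ, S ≠ ({1, 2, 3, 5} : Finset ℕ) → τ ({1, 2, 3, 5} : Finset ℕ) S) ∧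
      (∀ S : Finset ℕ, S ≠ ({1, 2, 3, 5} : Finset ℕ) → S ≠ ({4, 5, 6, 7} : Finset ℕ) →
        τ ({4, 5, 6, 7} : Finset ℕ) S) ∧
      (prefs 0 1 2 ∧ prefs 0 2 3 ∧ prefs 0 3 4 ∧
        ∀ q ∈ P19, q ∉ ({1, 2, 3, 4} : Finset ℕ) → prefs 0 4 q) ∧
      (prefs 1 4 5 ∧ prefs 1 5 6 ∧ prefs 1 6 7 ∧
        ∀ q ∈ P19, q ∉ ({4, 5, 6, 7} : Finset ℕ) → prefs 1 7 q) ∧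
      ∃ (A : Profile 2) (i : Fin 2),
        i = 0 ∧ (∀ j, A j ⊆ P19) ∧
        A i = ({1, 2, 3} : Finset ℕ) ∧
        A i ≠ GREED c19 4 P19 (prefs i) ∧
        (∀ j, j ≠ i → A j = GREED c19 4 P19 (prefs j)) ∧
        overlapU c19 (GREED c19 4 P19 (prefs i))
            (approvalMaxTau τ 2 c19 4 P19 (Function.update A i (GREED c19 4 P19 (prefs i)))) <
          overlapU c19 (GREED c19 4 P19 (prefs i)) (approvalMaxTau τ 2 c19 4 P19 A) ∧
        costU c19 (GREED c19 4 P19 (prefs i))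
            (approvalMaxTau τ 2 c19 4 P19 (Function.update A i (GREED c19 4 P19 (prefs i)))) <
          costU c19 (GREED c19 4 P19 (prefs i)) (approvalMaxTau τ 2 c19 4 P19 A) := by
  refine ⟨tieBreak, agentOrder, inferInstance, fun _ => inferInstance, tieBreak_first,
    tieBreak_second, by decide, by decide, insincereBallots, 0, rfl, by decide, rfl, ?_,
    Fin.forall_fin_two.2 ⟨fun h => absurd rfl h, fun _ => GREED_agentOrder_one.symm⟩, ?_⟩
  · rw [GREED_agentOrder_zero]
    decide
  · rw [GREED_agentOrder_zero, update_insincereBallots, approvalMaxTau_sincere,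
      approvalMaxTau_insincere]
    decide

end PB
end
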